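/- arXiv:2012.12190 — 2 statements merged into one kernel-verified Lean document; each statement's English description precedes it below -/
import Mathlib

section
/- Let G be a finite connected simple graph and M ⊆ V(G) a set of monitors with |M| ≥ 3, and let G_ex be the extended graph of G with added virtual monitors m'1 and m'2. Then G_ex + m'1m'2 (the graph obtained from G_ex by adding the edge m'1m'2) is 3-vertex-connected if and only if G_ex is 3-vertex-connected. -/
open SimpleGraph

/-- The total weight of a walk: the sum of the weights of its edges. -/
def walkWeight {V : Type*} (G : SimpleGraph V) {u v : V} (w : Sym2 V → ℝ) (p : G.Walk u v) : ℝ :=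
  (p.edges.map w).sum

/-- An edge is identifiable if any two weight functions agreeing on the total weight of
every simple path between the monitors m1 and m2 agree on that edge. -/
def Identifiable {V : Type*} (G : SimpleGraph V) (m1 m2 : V) (e : Sym2 V) : Prop :=
  ∀ w w' : Sym2 V → ℝ,
    (∀ p : G.Walk m1 m2, p.IsPath → walkWeight G w p = walkWeight G w' p) →
    w e = w' e

/-- k-vertex-connectivity: more than k vertices, and still connected after deleting
any set of fewer than k vertices. -/
def KVertexConnected {V : Type*} [Fintype V] [DecidableEq V] (G : SimpleGraph V) (k : ℕ) : Prop :=
  k < Fintype.card V ∧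
  ∀ S : Finset V, S.card < k → (G.induce (↑(Sᶜ) : Set V)).Connected

/-- k-edge-connectivity: at least two vertices, and still connected after deleting
any set of fewer than k edges. -/
def KEdgeConnected {V : Type*} [Fintype V] (G : SimpleGraph V) (k : ℕ) : Prop :=
  2 ≤ Fintype.card V ∧
  ∀ F : Finset (Sym2 V), F.card < k → (G.deleteEdges ↑F).Connected

/-- The extended graph: add two virtual monitors (`Sum.inr false` and `Sum.inr true`),
each adjacent to every monitor in M, with no edge joining the two virtual monitors. -/
def extendedGraph {V : Type*} (G : SimpleGraph V) (M : Set V) : SimpleGraph (V ⊕ Bool) :=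
  SimpleGraph.fromRel (fun a b =>
    match a, b with
    | Sum.inl u, Sum.inl v => G.Adj u v
    | Sum.inl u, Sum.inr _ => u ∈ M
    | Sum.inr _, Sum.inl v => v ∈ M
    | Sum.inr _, Sum.inr _ => False)

/-!
Adding the edge between the two virtual monitors cannot raise vertex connectivity to 3: deleting
at most two vertices leaves some monitor, and that monitor is a common neighbour of both virtual
monitors, so the new edge can be bypassed through it.
-/

open Finset

namespace SimpleGraph

variable {V : Type*}

lemma Preconnected.of_adj_reachable {G H : SimpleGraph V} (hH : H.Preconnected)
    (h : ∀ ⦃u v⦄, H.Adj u v → G.Reachable u v) : G.Preconnected := fun u v =>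
  (reachable_iff_reflTransGen u v).2 <| Relation.ReflTransGen.lift' id
    (fun a b hab => (reachable_iff_reflTransGen a b).1 (h hab)) u v
    ((reachable_iff_reflTransGen u v).1 (hH u v))

lemma Connected.of_adj_reachable {G H : SimpleGraph V} (hH : H.Connected)
    (h : ∀ ⦃u v⦄, H.Adj u v → G.Reachable u v) : G.Connected :=
  have := hH.nonempty
  ⟨hH.preconnected.of_adj_reachable h⟩

lemma induce_reachable_of_sup_edge_adj {G : SimpleGraph V} {x y z : V} {s : Set V}
    (hz : z ∈ G.commonNeighbors x y) (hzs : z ∈ s) {a b : s}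
    (hab : ((G ⊔ edge x y).induce s).Adj a b) : (G.induce s).Reachable a b := by
  rcases hab with hab | hab
  · exact Adj.reachable hab
  have hz' (c : s) (hc : (c : V) = x ∨ (c : V) = y) : (G.induce s).Adj c ⟨z, hzs⟩ := by
    rcases hc with hc | hc <;> simp only [comap_adj, Function.Embedding.coe_subtype, hc]
    exacts [hz.1, hz.2]
  rw [edge_adj] at hab
  rcases hab with ⟨⟨ha, hb⟩ | ⟨ha, hb⟩, -⟩
  · exact (hz' a (.inl ha)).reachable.trans (hz' b (.inr hb)).reachable.symm
  · exact (hz' a (.inr ha)).reachable.trans (hz' b (.inl hb)).reachable.symm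

end SimpleGraph

section KVertexConnected

variable {V : Type*} [Fintype V] [DecidableEq V]

lemma KVertexConnected.mono {G H : SimpleGraph V} (hGH : G ≤ H) {k : ℕ}
    (hG : KVertexConnected G k) : KVertexConnected H k :=
  ⟨hG.1, fun S hS => (hG.2 S hS).mono (comap_monotone _ hGH)⟩

lemma kVertexConnected_sup_edge_iff {G : SimpleGraph V} {x y : V} {k : ℕ} {N : Finset V}
    (hN : ↑N ⊆ G.commonNeighbors x y) (hk : k ≤ #N) :
    KVertexConnected (G ⊔ edge x y) k ↔ KVertexConnected G k := by
  refine ⟨fun h => ⟨h.1, fun S hS => ?_⟩, KVertexConnected.mono le_sup_left⟩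
  obtain ⟨z, hzN, hzS⟩ := exists_mem_notMem_of_card_lt_card (hS.trans_le hk)
  exact (h.2 S hS).of_adj_reachable fun a b hab =>
    induce_reachable_of_sup_edge_adj (hN hzN) (by simpa using hzS) hab

end KVertexConnected

lemma extendedGraph_adj_inr_inl {V : Type*} (G : SimpleGraph V) (M : Set V) (b : Bool) (v : V) :
    (extendedGraph G M).Adj (Sum.inr b) (Sum.inl v) ↔ v ∈ M := by
  simp [extendedGraph]

lemma inl_image_subset_commonNeighbors_extendedGraph {V : Type*} (G : SimpleGraph V) (M : Set V)
    (b b' : Bool) :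
    Sum.inl '' M ⊆ (extendedGraph G M).commonNeighbors (Sum.inr b) (Sum.inr b') := by
  rintro _ ⟨v, hv, rfl⟩
  exact ⟨(extendedGraph_adj_inr_inl G M b v).2 hv, (extendedGraph_adj_inr_inl G M b' v).2 hv⟩

theorem extended_plus_virtual_edge_three_connected_iff_general
    {V : Type*} [Fintype V] [DecidableEq V]
    (G : SimpleGraph V) (M : Finset V) (hM : 3 ≤ M.card) :
    KVertexConnected
      ((extendedGraph G ↑M) ⊔
        SimpleGraph.fromEdgeSet {s((Sum.inr false : V ⊕ Bool), (Sum.inr true : V ⊕ Bool))}) 3 ↔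
    KVertexConnected (extendedGraph G ↑M) 3 :=
  kVertexConnected_sup_edge_iff (N := M.map .inl)
    (by simpa using inl_image_subset_commonNeighbors_extendedGraph G ↑M false true)
    (by simpa using hM)

/-- With at least 3 monitors, G_ex + m'1m'2 is 3-vertex-connected
if and only if G_ex is 3-vertex-connected. -/
theorem extended_plus_virtual_edge_three_connected_iff
    {V : Type*} [Fintype V] [DecidableEq V]
    (G : SimpleGraph V) (hG : G.Connected) (M : Finset V) (hM : 3 ≤ M.card) :
    KVertexConnected
      ((extendedGraph G ↑M) ⊔
        SimpleGraph.fromEdgeSet {s((Sum.inr false : V ⊕ Bool), (Sum.inr true : V ⊕ Bool))}) 3 ↔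
    KVertexConnected (extendedGraph G ↑M) 3 :=
  extended_plus_virtual_edge_three_connected_iff_general G M hM
end

section
/- Let G be a finite simple graph with two distinguished vertices m1 ≠ m2 (the monitors), let r and s be two distinct vertices of G, and let C be a connected component of G − r − s such that m1 ∉ V(C) and m2 ∉ V(C). Then every edge of G joining r to a vertex of C and every edge of G joining s to a vertex of C is unidentifiable. -/
/-! Take `w` = the indicator of the edges from `r` into `C` and `w'` = that of the edges from
`s` into `C`. A simple path between two vertices outside `C` can enter or leave `C` only through
`r` or `s`, and visits each of them at most once; so it enters `C` through one of them exactly when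
it leaves through the other, and `w`, `w'` give it the same weight. Yet `w` and `w'` differ on
every edge from `r` or `s` into `C`. -/

open SimpleGraph

section

variable {V : Type*}

lemma walkWeight_cons {G : SimpleGraph V} (w : Sym2 V → ℝ) {a v b : V} (h : G.Adj a v)
    (q : G.Walk v b) : walkWeight G w (.cons h q) = w s(a, v) + walkWeight G w q := by
  simp [walkWeight]

lemma SimpleGraph.ConnectedComponent.mem_image_supp_of_adj {G : SimpleGraph V} {S : Set V}
    {c : (G.induce S).ConnectedComponent} {x y : V} (hx : x ∈ Subtype.val '' c.supp)
    (hy : y ∈ S) (hxy : G.Adj x y) : y ∈ Subtype.val '' c.supp := by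
  obtain ⟨x, hx, rfl⟩ := hx
  exact ⟨⟨y, hy⟩, c.mem_supp_of_adj_mem_supp hx hxy, rfl⟩

noncomputable def cutIndicator (t : V) (D : Set V) : Sym2 V → ℝ :=
  Set.indicator {e | ∃ x ∈ D, e = s(t, x)} 1

lemma cutIndicator_mk_self {t b : V} {D : Set V} (hb : b ∈ D) : cutIndicator t D s(t, b) = 1 :=
  Set.indicator_of_mem (s := {e | ∃ x ∈ D, e = s(t, x)}) ⟨b, hb, rfl⟩ 1

lemma cutIndicator_mk_of_ne {t a b : V} {D : Set V} (ha : a ≠ t) (hb : b ≠ t) :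
    cutIndicator t D s(a, b) = 0 := by
  refine Set.indicator_of_notMem ?_ 1
  rintro ⟨x, -, hx⟩
  rcases Sym2.eq_iff.1 hx with ⟨rfl, -⟩ | ⟨-, rfl⟩ <;> contradiction

lemma cutIndicator_mk_of_notMem {t a b : V} {D : Set V} (ha : a ∉ D) (hb : b ∉ D) :
    cutIndicator t D s(a, b) = 0 := by
  refine Set.indicator_of_notMem ?_ 1
  rintro ⟨x, hx, hab⟩
  rcases Sym2.eq_iff.1 hab with ⟨-, rfl⟩ | ⟨rfl, -⟩ <;> contradiction

variable (G : SimpleGraph V) (D : Set V) (r s : V) in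
def CutBalanced {a b : V} (p : G.Walk a b) : Prop :=
  (a ∉ D → walkWeight G (cutIndicator r D) p = walkWeight G (cutIndicator s D) p) ∧
  (a ∈ D → r ∉ p.support →
    walkWeight G (cutIndicator r D) p + 1 = walkWeight G (cutIndicator s D) p)

section Path

variable {G : SimpleGraph V} {D : Set V} {r s : V}

lemma cutBalanced_cons (hrs : r ≠ s) (hr : r ∉ D) (hs : s ∉ D)
    (hD : ∀ ⦃x y⦄, x ∈ D → G.Adj x y → y ∉ D → y = r ∨ y = s)
    {a v b : V} (h : G.Adj a v) (q : G.Walk v b) (hp : (Walk.cons h q).IsPath)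
    (hq : CutBalanced G D r s q) (hq' : CutBalanced G D s r q) :
    CutBalanced G D r s (.cons h q) := by
  have ha_q : a ∉ q.support := ((Walk.cons_isPath_iff h q).1 hp).2
  simp only [CutBalanced, walkWeight_cons]
  constructor
  · intro ha
    by_cases hv : v ∈ D
    · have hvr := ne_of_mem_of_not_mem hv hr
      have hvs := ne_of_mem_of_not_mem hv hs
      rcases hD hv h.symm ha with rfl | rfl
      · rw [cutIndicator_mk_self hv, cutIndicator_mk_of_ne hrs hvs, ← hq.2 hv ha_q]
        ring
      · rw [cutIndicator_mk_self hv, cutIndicator_mk_of_ne hrs.symm hvr, ← hq'.2 hv ha_q]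
        ring
    · rw [cutIndicator_mk_of_notMem ha hv, cutIndicator_mk_of_notMem ha hv, hq.1 hv]
  · intro ha hr_p
    rw [Walk.support_cons, List.mem_cons, not_or] at hr_p
    have har := ne_of_mem_of_not_mem ha hr
    by_cases hv : v ∈ D
    · rw [cutIndicator_mk_of_ne har (ne_of_mem_of_not_mem hv hr),
        cutIndicator_mk_of_ne (ne_of_mem_of_not_mem ha hs) (ne_of_mem_of_not_mem hv hs),
        ← hq.2 hv hr_p.2]
      ring
    · rcases hD ha h hv with rfl | rfl
      · exact (hr_p.2 q.start_mem_support).elim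
      · rw [cutIndicator_mk_of_ne har hrs.symm, Sym2.eq_swap, cutIndicator_mk_self ha, hq.1 hv]
        ring

lemma cutBalanced_of_isPath (hrs : r ≠ s) (hr : r ∉ D) (hs : s ∉ D)
    (hD : ∀ ⦃x y⦄, x ∈ D → G.Adj x y → y ∉ D → y = r ∨ y = s)
    {a b : V} (p : G.Walk a b) (hp : p.IsPath) (hb : b ∉ D) :
    CutBalanced G D r s p ∧ CutBalanced G D s r p := by
  induction p with
  | nil => exact ⟨⟨fun _ => rfl, fun ha => absurd ha hb⟩, ⟨fun _ => rfl, fun ha => absurd ha hb⟩⟩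
  | cons h q ih =>
    obtain ⟨hq, hq'⟩ := ih hp.of_cons hb
    have hD' : ∀ ⦃x y⦄, x ∈ D → G.Adj x y → y ∉ D → y = s ∨ y = r :=
      fun _ _ hx hxy hy => (hD hx hxy hy).symm
    exact ⟨cutBalanced_cons hrs hr hs hD h q hp hq hq',
      cutBalanced_cons hrs.symm hs hr hD' h q hp hq' hq⟩

theorem walkWeight_cutIndicator_eq (hrs : r ≠ s) (hr : r ∉ D) (hs : s ∉ D)
    (hD : ∀ ⦃x y⦄, x ∈ D → G.Adj x y → y ∉ D → y = r ∨ y = s)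
    {a b : V} (p : G.Walk a b) (hp : p.IsPath) (ha : a ∉ D) (hb : b ∉ D) :
    walkWeight G (cutIndicator r D) p = walkWeight G (cutIndicator s D) p :=
  (cutBalanced_of_isPath hrs hr hs hD p hp hb).1.1 ha

end Path

end

theorem edges_into_monitorless_component_unidentifiable_general
    {V : Type*}
    (G : SimpleGraph V) (m1 m2 : V)
    (r s : V) (hrs : r ≠ s)
    (c : (G.induce {v | v ≠ r ∧ v ≠ s}).ConnectedComponent)
    (hm1 : ∀ u ∈ c.supp, (u : V) ≠ m1)
    (hm2 : ∀ u ∈ c.supp, (u : V) ≠ m2) :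
    ∀ u ∈ c.supp,
      (G.Adj r (u : V) → ¬ Identifiable G m1 m2 s(r, (u : V))) ∧
      (G.Adj s (u : V) → ¬ Identifiable G m1 m2 s(s, (u : V))) := by
  intro u hu
  set D : Set V := Subtype.val '' c.supp
  have hr : r ∉ D := by rintro ⟨x, -, hx⟩; exact x.2.1 hx
  have hs : s ∉ D := by rintro ⟨x, -, hx⟩; exact x.2.2 hx
  have hD : ∀ ⦃x y⦄, x ∈ D → G.Adj x y → y ∉ D → y = r ∨ y = s := by
    intro x y hx hxy hy
    by_contra! hyrs
    exact hy (c.mem_image_supp_of_adj hx hyrs hxy)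
  have hm1D : m1 ∉ D := by rintro ⟨x, hx, rfl⟩; exact hm1 x hx rfl
  have hm2D : m2 ∉ D := by rintro ⟨x, hx, rfl⟩; exact hm2 x hx rfl
  have hpaths : ∀ p : G.Walk m1 m2, p.IsPath →
      walkWeight G (cutIndicator r D) p = walkWeight G (cutIndicator s D) p :=
    fun p hp => walkWeight_cutIndicator_eq hrs hr hs hD p hp hm1D hm2D
  have huD : (u : V) ∈ D := ⟨u, hu, rfl⟩
  refine ⟨fun _ hid => ?_, fun _ hid => ?_⟩
  · have h := hid _ _ hpaths
    rw [cutIndicator_mk_self huD, cutIndicator_mk_of_ne hrs (ne_of_mem_of_not_mem huD hs)] at h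
    exact one_ne_zero h
  · have h := hid _ _ hpaths
    rw [cutIndicator_mk_self huD, cutIndicator_mk_of_ne hrs.symm (ne_of_mem_of_not_mem huD hr)] at h
    exact zero_ne_one h

/-- If C is a connected component of G − r − s containing neither
monitor, then every edge joining r (or s) to a vertex of C is unidentifiable. -/
theorem edges_into_monitorless_component_unidentifiable
    {V : Type*} [Fintype V] [DecidableEq V]
    (G : SimpleGraph V) (m1 m2 : V) (hm : m1 ≠ m2)
    (r s : V) (hrs : r ≠ s)
    (c : (G.induce {v | v ≠ r ∧ v ≠ s}).ConnectedComponent)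
    (hm1 : ∀ u ∈ c.supp, (u : V) ≠ m1)
    (hm2 : ∀ u ∈ c.supp, (u : V) ≠ m2) :
    ∀ u ∈ c.supp,
      (G.Adj r (u : V) → ¬ Identifiable G m1 m2 s(r, (u : V))) ∧
      (G.Adj s (u : V) → ¬ Identifiable G m1 m2 s(s, (u : V))) :=
  edges_into_monitorless_component_unidentifiable_general G m1 m2 r s hrs c hm1 hm2
end
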